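/- Under the variable–variable block of covariance evolution with its initial conditions, for all y ∈ (0,1] one has Σ_{k∈L} δ^{l_k,l_k}/(k² l̂_k) = (ε ε̃ / e) Σ_{k∈L} λ_k/k + Σ_{k∈L} ((l̂_k − e)/e) · (ε y^k − 1)/k. (Intermediate identity in the proof of Theorem 1, equation (1).) -/

import Mathlib

open Finset

namespace LDPC

/-- λ(y) = Σ_{k∈L} λ_k y^{k-1} -/
noncomputable def lamP (L : Finset ℕ) (lam : ℕ → ℝ) (y : ℝ) : ℝ :=
  ∑ k ∈ L, lam k * y ^ (k - 1)

/-- λ'(y) = Σ_{k∈L} (k-1) λ_k y^{k-2} -/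
noncomputable def lamD (L : Finset ℕ) (lam : ℕ → ℝ) (y : ℝ) : ℝ :=
  ∑ k ∈ L, ((k : ℝ) - 1) * lam k * y ^ (k - 2)

/-- λ''(y) = Σ_{k∈L} (k-1)(k-2) λ_k y^{k-3} -/
noncomputable def lamDD (L : Finset ℕ) (lam : ℕ → ℝ) (y : ℝ) : ℝ :=
  ∑ k ∈ L, ((k : ℝ) - 1) * ((k : ℝ) - 2) * lam k * y ^ (k - 3)

/-- ρ(z) = Σ_{k∈R} ρ_k z^{k-1} -/
noncomputable def rhoP (R : Finset ℕ) (rho : ℕ → ℝ) (z : ℝ) : ℝ :=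
  ∑ k ∈ R, rho k * z ^ (k - 1)

/-- ρ'(z) = Σ_{k∈R} (k-1) ρ_k z^{k-2} -/
noncomputable def rhoD (R : Finset ℕ) (rho : ℕ → ℝ) (z : ℝ) : ℝ :=
  ∑ k ∈ R, ((k : ℝ) - 1) * rho k * z ^ (k - 2)

/-- x = ελ(y) -/
noncomputable def xF (L : Finset ℕ) (lam : ℕ → ℝ) (ε y : ℝ) : ℝ := ε * lamP L lam y

/-- x' = ελ'(y) -/
noncomputable def xD (L : Finset ℕ) (lam : ℕ → ℝ) (ε y : ℝ) : ℝ := ε * lamD L lam y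

/-- x'' = ελ''(y) -/
noncomputable def xDD (L : Finset ℕ) (lam : ℕ → ℝ) (ε y : ℝ) : ℝ := ε * lamDD L lam y

/-- e = xy -/
noncomputable def eF (L : Finset ℕ) (lam : ℕ → ℝ) (ε y : ℝ) : ℝ := xF L lam ε y * y

/-- a = (x'y + x)/x -/
noncomputable def aF (L : Finset ℕ) (lam : ℕ → ℝ) (ε y : ℝ) : ℝ :=
  (xD L lam ε y * y + xF L lam ε y) / xF L lam ε y

/-- l̂_k(y) = ε λ_k y^k -/
noncomputable def lhat (lam : ℕ → ℝ) (ε : ℝ) (k : ℕ) (y : ℝ) : ℝ := ε * lam k * y ^ k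

/-- r̂_j(y); for j = 1 the special formula x(y-1+ρ(1-x)), else Σ_{i∈R} ρ_i C(i-1,j-1) x^j (1-x)^{i-j}. -/
noncomputable def rhat (L R : Finset ℕ) (lam rho : ℕ → ℝ) (ε : ℝ) (j : ℕ) (y : ℝ) : ℝ :=
  if j = 1 then xF L lam ε y * (y - 1 + rhoP R rho (1 - xF L lam ε y))
  else ∑ i ∈ R, rho i * ((i - 1).choose (j - 1) : ℝ) * xF L lam ε y ^ j *
    (1 - xF L lam ε y) ^ (i - j)

/-- G_j(y) = j(r̂_{j+1} - r̂_j)/x for j ≤ d_c - 1, and G_{d_c}(y) = -d_c r̂_{d_c}/x. -/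
noncomputable def Gf (L R : Finset ℕ) (lam rho : ℕ → ℝ) (ε : ℝ) (dc j : ℕ) (y : ℝ) : ℝ :=
  if j = dc then -((dc : ℝ) * rhat L R lam rho ε dc y) / xF L lam ε y
  else (j : ℝ) * (rhat L R lam rho ε (j + 1) y - rhat L R lam rho ε j y) / xF L lam ε y

/-- F(y) = Σ_{k∈L} (λ_k/k)[ε²(y^k-1)² + ε(y^k-1)] -/
noncomputable def Ff (L : Finset ℕ) (lam : ℕ → ℝ) (ε y : ℝ) : ℝ :=
  ∑ k ∈ L, lam k / (k : ℝ) * (ε ^ 2 * (y ^ k - 1) ^ 2 + ε * (y ^ k - 1))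

/-- F'(y) = 2Σ_{k∈L} ε²λ_k y^{2k-1} - (ε - ε̃)x -/
noncomputable def Fd (L : Finset ℕ) (lam : ℕ → ℝ) (ε y : ℝ) : ℝ :=
  2 * ∑ k ∈ L, ε ^ 2 * lam k * y ^ (2 * k - 1) - (ε - (1 - ε)) * xF L lam ε y

/-- V_{i,j}(y) = Σ_{s∈R} sρ_s C(s-1,i-1)C(s-1,j-1) x^{i+j} (1-x)^{2s-i-j} -/
noncomputable def Vf (L R : Finset ℕ) (lam rho : ℕ → ℝ) (ε : ℝ) (i j : ℕ) (y : ℝ) : ℝ :=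
  ∑ s ∈ R, (s : ℝ) * rho s * ((s - 1).choose (i - 1) : ℝ) * ((s - 1).choose (j - 1) : ℝ) *
    xF L lam ε y ^ (i + j) * (1 - xF L lam ε y) ^ (2 * s - i - j)

/-- The variable–variable block of covariance evolution, with its initial conditions. -/
def CEvv (L : Finset ℕ) (lam : ℕ → ℝ) (ε : ℝ) (δll : ℕ → ℕ → ℝ → ℝ) : Prop :=
  (∀ k ∈ L, ∀ s ∈ L, ∀ y ∈ Set.Ioc (0 : ℝ) 1,
    HasDerivWithinAt (δll k s)
      (-(xF L lam ε y) *
          (((s : ℝ) * lhat lam ε s y / eF L lam ε y ^ 2) * ∑ t ∈ L, δll k t y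
            + ((k : ℝ) * lhat lam ε k y / eF L lam ε y ^ 2) * ∑ t ∈ L, δll s t y
            - (((k : ℝ) + (s : ℝ)) / eF L lam ε y) * δll k s y)
        - xF L lam ε y * (k : ℝ) * (s : ℝ) * (lhat lam ε k y / eF L lam ε y) *
            ((if k = s then (1 : ℝ) else 0) - lhat lam ε s y / eF L lam ε y))
      (Set.Ioc 0 1) y)
  ∧ ∀ k ∈ L, ∀ s ∈ L,
      δll k s 1 = (if k = s then (1 : ℝ) else 0) * (k : ℝ) * lam k * ε * (1 - ε)

/-- The variable–check block of covariance evolution, with its initial conditions. -/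
def CEvc (L R : Finset ℕ) (lam rho : ℕ → ℝ) (ε : ℝ) (dc : ℕ)
    (δll δlr : ℕ → ℕ → ℝ → ℝ) : Prop :=
  (∀ k ∈ L, ∀ j ∈ Finset.Icc 1 (dc - 1), ∀ y ∈ Set.Ioc (0 : ℝ) 1,
    HasDerivWithinAt (δlr k j)
      (2 * (xD L lam ε y / eF L lam ε y) * Gf L R lam rho ε dc j y * ∑ t ∈ L, δll k t y
        - (Gf L R lam rho ε dc j y / y ^ 2) * ∑ i ∈ L, ((i : ℝ) - 1) * δll k i y
        - xF L lam ε y * (aF L lam ε y - (k : ℝ)) * ((k : ℝ) * lhat lam ε k y / eF L lam ε y)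
            * (Gf L R lam rho ε dc j y / y)
        - ((k : ℝ) * lhat lam ε k y / (eF L lam ε y * y)) * ∑ t ∈ L, δlr t j y
        + ((k : ℝ) / y) * δlr k j y
        - (j : ℝ) * (xD L lam ε y / xF L lam ε y) *
            ((if j + 1 = dc then
                (∑ t ∈ L, δll k t y) - ∑ j' ∈ Finset.Icc 1 (dc - 1), δlr k j' y
              else δlr k (j + 1) y) - δlr k j y))
      (Set.Ioc 0 1) y)
  ∧ ∀ k ∈ L, ∀ j ∈ Finset.Icc 1 (dc - 1),
      δlr k j 1 = -((k : ℝ) * lam k * ε * (1 - ε)) * Gf L R lam rho ε dc j 1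

/-- The check–check block of covariance evolution, with symmetry and initial conditions. -/
def CErr (L R : Finset ℕ) (lam rho : ℕ → ℝ) (ε : ℝ) (dc : ℕ)
    (δlr δrr : ℕ → ℕ → ℝ → ℝ) : Prop :=
  (∀ i ∈ Finset.Icc 1 (dc - 1), ∀ j ∈ Finset.Icc 1 (dc - 1), ∀ y ∈ Set.Ioc (0 : ℝ) 1,
      δrr i j y = δrr j i y)
  ∧ (∀ i ∈ Finset.Icc 1 (dc - 1), ∀ j ∈ Finset.Icc 1 (dc - 1), ∀ y ∈ Set.Ioc (0 : ℝ) 1,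
    HasDerivWithinAt (δrr i j)
      (-(xD L lam ε y / xF L lam ε y) *
          ((i : ℝ) * (if i + 1 = dc then
                (∑ k ∈ L, δlr k j y) - ∑ i' ∈ Finset.Icc 1 (dc - 1), δrr i' j y
              else δrr (i + 1) j y)
            + (j : ℝ) * (if j + 1 = dc then
                (∑ k ∈ L, δlr k i y) - ∑ i' ∈ Finset.Icc 1 (dc - 1), δrr i' i y
              else δrr (j + 1) i y)
            - ((i : ℝ) + (j : ℝ)) * δrr i j y)
        + (∑ k ∈ L, ((2 * aF L lam ε y - (k : ℝ) - 1) / y ^ 2) *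
            (δlr k j y * Gf L R lam rho ε dc i y + δlr k i y * Gf L R lam rho ε dc j y))
        - xF L lam ε y *
            (((xDD L lam ε y * xF L lam ε y - xD L lam ε y ^ 2) / xF L lam ε y ^ 2) *
                Gf L R lam rho ε dc i y * Gf L R lam rho ε dc j y
              + (i : ℝ) * (j : ℝ) * (xD L lam ε y / xF L lam ε y ^ 2) *
                  ((if i = j then rhat L R lam rho ε (j + 1) y + rhat L R lam rho ε j y else 0)
                    - (if i = j + 1 then rhat L R lam rho ε i y else 0)
                    - (if j = i + 1 then rhat L R lam rho ε j y else 0))))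
      (Set.Ioc 0 1) y)
  ∧ ∀ i ∈ Finset.Icc 1 (dc - 1), ∀ j ∈ Finset.Icc 1 (dc - 1),
      δrr i j 1 = (if i = j then (i : ℝ) * rhat L R lam rho ε i 1 else 0)
        - Vf L R lam rho ε i j 1
        + (∑ k ∈ L, ((k : ℝ) - 1) * lam k) * ε * (1 - ε) *
            Gf L R lam rho ε dc i 1 * Gf L R lam rho ε dc j 1

end LDPC

/-!
The variable–variable block is a linear system whose coefficients are continuous wherever
`e ≠ 0`, i.e. on all of `(0, 1]`, so (Grönwall, run backwards from `y = 1`) a solution is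
determined by its initial values and it suffices to exhibit one. With `θ = y d/dy`, so that
`θ l̂_k = k l̂_k` and `θ e = Σ_t t l̂_t`, the ansatz
`δ^{l_k,l_s} = k s l̂_k l̂_s (q_k + q_s) + 1_{k=s} k l̂_k (1 - ε y^k)` reduces the system to
`θ (e q_k) = -(Σ_t t l̂_t q_t + 1/2 - ε y^k)`. It is solved by `q_k = p + r_k` with
`e r_k = ε (y^k - 1) / k` and `e² p = (1 - ε) B(1) / 2 - ε C / 2 + (ε - 1/2) B`, where
`B = Σ_t l̂_t / t` and `C = Σ_t l̂_t y^t / t`; the constant makes `q_k(1) = 0`.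
On the diagonal the claimed identity is then a rearrangement of these sums.
-/

open Set

theorem hasDerivAt_pow_div (n : ℕ) {y : ℝ} (hy : y ≠ 0) :
    HasDerivAt (· ^ n) (n * y ^ n / y) y := by
  refine (hasDerivAt_pow n y).congr_deriv ?_
  rcases n with _ | n
  · simp
  · rw [pow_succ, mul_div_assoc, mul_div_cancel_right₀ _ hy, Nat.add_sub_cancel]

theorem eqOn_of_hasDerivWithinAt_linear_system {ι : Type*} [Fintype ι] {a b : ℝ}
    {M : ℝ → ι → ι → ℝ} {c : ℝ → ι → ℝ} {f g : ℝ → ι → ℝ}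
    (hM : ContinuousOn M (Icc a b))
    (hf : ContinuousOn f (Icc a b))
    (hf' : ∀ t ∈ Ioc a b, ∀ i,
      HasDerivWithinAt (f · i) (∑ j, M t i j * f t j + c t i) (Iic t) t)
    (hg : ContinuousOn g (Icc a b))
    (hg' : ∀ t ∈ Ioc a b, ∀ i,
      HasDerivWithinAt (g · i) (∑ j, M t i j * g t j + c t i) (Iic t) t)
    (hb : f b = g b) :
    EqOn f g (Icc a b) := by
  obtain ⟨C, hC⟩ := isCompact_Icc.exists_bound_of_continuousOn hM
  have hlip : ∀ t ∈ Ioc a b, LipschitzOnWith (Fintype.card ι * max C 0).toNNReal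
      (fun (x : ι → ℝ) i => ∑ j, M t i j * x j + c t i) univ := by
    intro t ht
    have hMC : ∀ i j, ‖M t i j‖ ≤ max C 0 := fun i j =>
      ((norm_le_pi_norm (M t i) j).trans (norm_le_pi_norm (M t) i)).trans
        ((hC t (Ioc_subset_Icc_self ht)).trans (le_max_left C 0))
    rw [lipschitzOnWith_univ]
    refine LipschitzWith.of_dist_le_mul fun x y => ?_
    rw [Real.coe_toNNReal _ (by positivity)]
    refine (dist_pi_le_iff (by positivity)).2 fun i => ?_
    calc dist (∑ j, M t i j * x j + c t i) (∑ j, M t i j * y j + c t i)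
        = ‖∑ j, M t i j * (x j - y j)‖ := by
          simp only [dist_eq_norm, add_sub_add_right_eq_sub, ← Finset.sum_sub_distrib, mul_sub]
      _ ≤ ∑ j, ‖M t i j‖ * ‖x j - y j‖ := by
          simpa only [norm_mul] using norm_sum_le Finset.univ fun j => M t i j * (x j - y j)
      _ ≤ ∑ _j : ι, max C 0 * dist x y := by
          gcongr with j
          · exact hMC i j
          · rw [← dist_eq_norm]
            exact dist_le_pi_dist x y j
      _ = Fintype.card ι * max C 0 * dist x y := by
          rw [Finset.sum_const, Finset.card_univ, nsmul_eq_mul, mul_assoc]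
  exact ODE_solution_unique_of_mem_Icc_left (s := fun _ => univ) hlip hf
    (fun t ht => hasDerivWithinAt_pi.2 (hf' t ht)) (fun _ _ => mem_univ _) hg
    (fun t ht => hasDerivWithinAt_pi.2 (hg' t ht)) (fun _ _ => mem_univ _) hb

namespace LDPC

noncomputable def mF (L : Finset ℕ) (lam : ℕ → ℝ) (ε y : ℝ) : ℝ :=
  ∑ t ∈ L, (t : ℝ) * lhat lam ε t y

noncomputable def bF (L : Finset ℕ) (lam : ℕ → ℝ) (ε y : ℝ) : ℝ :=
  ∑ t ∈ L, lhat lam ε t y / t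

noncomputable def cF (L : Finset ℕ) (lam : ℕ → ℝ) (ε y : ℝ) : ℝ :=
  ∑ t ∈ L, lhat lam ε t y * y ^ t / t

noncomputable def pF (L : Finset ℕ) (lam : ℕ → ℝ) (ε y : ℝ) : ℝ :=
  ((1 - ε) * bF L lam ε 1 / 2 - ε * cF L lam ε y / 2 + (ε - 1 / 2) * bF L lam ε y) /
    eF L lam ε y ^ 2

noncomputable def rF (L : Finset ℕ) (lam : ℕ → ℝ) (ε : ℝ) (k : ℕ) (y : ℝ) : ℝ :=
  ε * (y ^ k - 1) / (k * eF L lam ε y)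

noncomputable def qF (L : Finset ℕ) (lam : ℕ → ℝ) (ε : ℝ) (k : ℕ) (y : ℝ) : ℝ :=
  pF L lam ε y + rF L lam ε k y

noncomputable def nF (L : Finset ℕ) (lam : ℕ → ℝ) (ε y : ℝ) : ℝ :=
  ∑ t ∈ L, (t : ℝ) * lhat lam ε t y * qF L lam ε t y

noncomputable def vvSol (L : Finset ℕ) (lam : ℕ → ℝ) (ε : ℝ) (k s : ℕ) (y : ℝ) : ℝ :=
  k * s * lhat lam ε k y * lhat lam ε s y * (qF L lam ε k y + qF L lam ε s y)
    + if k = s then k * lhat lam ε k y * (1 - ε * y ^ k) else 0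

/-- With this, the derivative condition in `CEvv` reads
`HasDerivWithinAt (δll k s) (vvRHS L lam ε δll k s y) (Set.Ioc 0 1) y`. -/
noncomputable def vvRHS (L : Finset ℕ) (lam : ℕ → ℝ) (ε : ℝ) (δll : ℕ → ℕ → ℝ → ℝ) (k s : ℕ)
    (y : ℝ) : ℝ :=
  -(xF L lam ε y) *
      (((s : ℝ) * lhat lam ε s y / eF L lam ε y ^ 2) * ∑ t ∈ L, δll k t y
        + ((k : ℝ) * lhat lam ε k y / eF L lam ε y ^ 2) * ∑ t ∈ L, δll s t y
        - (((k : ℝ) + (s : ℝ)) / eF L lam ε y) * δll k s y)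
    - xF L lam ε y * (k : ℝ) * (s : ℝ) * (lhat lam ε k y / eF L lam ε y) *
        ((if k = s then (1 : ℝ) else 0) - lhat lam ε s y / eF L lam ε y)

noncomputable def vvCoeff (L : Finset ℕ) (lam : ℕ → ℝ) (ε y : ℝ) (p q : L × L) : ℝ :=
  -xF L lam ε y *
    (((p.2 : ℕ) * lhat lam ε p.2 y / eF L lam ε y ^ 2) * (if q.1 = p.1 then 1 else 0)
      + ((p.1 : ℕ) * lhat lam ε p.1 y / eF L lam ε y ^ 2) * (if q.1 = p.2 then 1 else 0)
      - (((p.1 : ℕ) + (p.2 : ℕ)) / eF L lam ε y) * (if q = p then 1 else 0))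

section

variable {L : Finset ℕ} {lam : ℕ → ℝ} {ε : ℝ}

theorem hasDerivAt_lhat (k : ℕ) {y : ℝ} (hy : y ≠ 0) :
    HasDerivAt (lhat lam ε k) (k * lhat lam ε k y / y) y :=
  ((hasDerivAt_pow_div k hy).const_mul (ε * lam k)).congr_deriv (by rw [lhat]; ring)

theorem eF_eq_sum_lhat (hL0 : 0 ∉ L) (y : ℝ) : eF L lam ε y = ∑ t ∈ L, lhat lam ε t y := by
  simp only [eF, xF, lamP, lhat, Finset.mul_sum, Finset.sum_mul]
  refine Finset.sum_congr rfl fun t ht => ?_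
  obtain ⟨n, rfl⟩ := Nat.exists_eq_succ_of_ne_zero (ne_of_mem_of_not_mem ht hL0)
  rw [pow_succ, Nat.succ_sub_one]
  ring

theorem xF_eq_eF_div {y : ℝ} (hy : y ≠ 0) : xF L lam ε y = eF L lam ε y / y := by
  rw [eF, mul_div_cancel_right₀ _ hy]

theorem eF_pos (hL : L.Nonempty) (hlam : ∀ k ∈ L, 0 < lam k) (hε : 0 < ε) {y : ℝ}
    (hy : 0 < y) : 0 < eF L lam ε y := by
  have : 0 < lamP L lam y := Finset.sum_pos (fun k hk => by have := hlam k hk; positivity) hL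
  simp only [eF, xF]
  positivity

theorem hasDerivAt_eF (hL0 : 0 ∉ L) {y : ℝ} (hy : y ≠ 0) :
    HasDerivAt (eF L lam ε) (mF L lam ε y / y) y := by
  rw [show eF L lam ε = fun y => ∑ t ∈ L, lhat lam ε t y from funext (eF_eq_sum_lhat hL0),
    mF, Finset.sum_div]
  exact HasDerivAt.fun_sum fun t _ => hasDerivAt_lhat t hy

theorem hasDerivAt_bF (hL0 : 0 ∉ L) {y : ℝ} (hy : y ≠ 0) :
    HasDerivAt (bF L lam ε) (eF L lam ε y / y) y := by
  rw [eF_eq_sum_lhat hL0, Finset.sum_div]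
  refine HasDerivAt.fun_sum fun t ht =>
    ((hasDerivAt_lhat t hy).div_const (t : ℝ)).congr_deriv ?_
  have : (t : ℝ) ≠ 0 := Nat.cast_ne_zero.2 (ne_of_mem_of_not_mem ht hL0)
  field_simp

theorem hasDerivAt_cF (hL0 : 0 ∉ L) {y : ℝ} (hy : y ≠ 0) :
    HasDerivAt (cF L lam ε) (2 * (∑ t ∈ L, lhat lam ε t y * y ^ t) / y) y := by
  rw [Finset.mul_sum, Finset.sum_div]
  refine HasDerivAt.fun_sum fun t ht =>
    (((hasDerivAt_lhat t hy).mul (hasDerivAt_pow_div t hy)).div_const (t : ℝ)).congr_deriv ?_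
  have : (t : ℝ) ≠ 0 := Nat.cast_ne_zero.2 (ne_of_mem_of_not_mem ht hL0)
  field_simp
  ring

theorem sum_mul_lhat_mul_rF (hL0 : 0 ∉ L) {y : ℝ} (he : eF L lam ε y ≠ 0) :
    ∑ t ∈ L, t * lhat lam ε t y * rF L lam ε t y
      = ε * (∑ t ∈ L, lhat lam ε t y * y ^ t - eF L lam ε y) / eF L lam ε y := by
  rw [eF_eq_sum_lhat hL0] at he ⊢
  rw [← Finset.sum_sub_distrib, Finset.mul_sum, Finset.sum_div]
  refine Finset.sum_congr rfl fun t ht => ?_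
  have : (t : ℝ) ≠ 0 := Nat.cast_ne_zero.2 (ne_of_mem_of_not_mem ht hL0)
  simp only [rF, eF_eq_sum_lhat hL0]
  field_simp

theorem hasDerivAt_pF (hL0 : 0 ∉ L) {y : ℝ} (hy : y ≠ 0) (he : eF L lam ε y ≠ 0) :
    HasDerivAt (pF L lam ε)
      (-(2 * mF L lam ε y * pF L lam ε y + ∑ t ∈ L, t * lhat lam ε t y * rF L lam ε t y
          + 1 / 2) / (eF L lam ε y * y)) y := by
  have hnum := ((((hasDerivAt_cF (lam := lam) (ε := ε) hL0 hy).const_mul ε).div_const 2).const_sub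
    ((1 - ε) * bF L lam ε 1 / 2)).add
      ((hasDerivAt_bF (lam := lam) (ε := ε) hL0 hy).const_mul (ε - 1 / 2))
  refine (hnum.div ((hasDerivAt_eF hL0 hy).pow 2) (pow_ne_zero 2 he)).congr_deriv ?_
  simp only [Pi.add_apply, Pi.pow_apply]
  rw [sum_mul_lhat_mul_rF hL0 he, pF]
  field_simp
  ring

theorem hasDerivAt_rF (hL0 : 0 ∉ L) {k : ℕ} (hk : k ≠ 0) {y : ℝ} (hy : y ≠ 0)
    (he : eF L lam ε y ≠ 0) :
    HasDerivAt (rF L lam ε k)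
      ((ε * y ^ k - mF L lam ε y * rF L lam ε k y) / (eF L lam ε y * y)) y := by
  have hk' : (k : ℝ) ≠ 0 := Nat.cast_ne_zero.2 hk
  refine ((((hasDerivAt_pow_div k hy).sub_const 1).const_mul ε).div
    ((hasDerivAt_eF hL0 hy).const_mul (k : ℝ)) (mul_ne_zero hk' he)).congr_deriv ?_
  rw [rF]
  field_simp

theorem nF_eq (y : ℝ) :
    nF L lam ε y
      = mF L lam ε y * pF L lam ε y + ∑ t ∈ L, t * lhat lam ε t y * rF L lam ε t y := by
  simp only [nF, qF, mF, mul_add, Finset.sum_add_distrib, Finset.sum_mul]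

theorem hasDerivAt_qF (hL0 : 0 ∉ L) {k : ℕ} (hk : k ≠ 0) {y : ℝ} (hy : y ≠ 0)
    (he : eF L lam ε y ≠ 0) :
    HasDerivAt (qF L lam ε k)
      (-(mF L lam ε y * qF L lam ε k y + nF L lam ε y + 1 / 2 - ε * y ^ k)
        / (eF L lam ε y * y)) y := by
  refine ((hasDerivAt_pF hL0 hy he).add (hasDerivAt_rF hL0 hk hy he)).congr_deriv ?_
  rw [nF_eq, qF]
  ring

theorem sum_vvSol {k : ℕ} (hk : k ∈ L) (y : ℝ) :
    ∑ t ∈ L, vvSol L lam ε k t y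
      = k * lhat lam ε k y *
          (mF L lam ε y * qF L lam ε k y + nF L lam ε y + 1 - ε * y ^ k) := by
  have hsplit : ∀ t, vvSol L lam ε k t y
      = k * lhat lam ε k y * qF L lam ε k y * (t * lhat lam ε t y)
        + k * lhat lam ε k y * (t * lhat lam ε t y * qF L lam ε t y)
        + if k = t then k * lhat lam ε k y * (1 - ε * y ^ k) else 0 := fun t => by
    rw [vvSol]; ring
  simp only [hsplit, Finset.sum_add_distrib, ← Finset.mul_sum, Finset.sum_ite_eq, if_pos hk]
  rw [mF, nF]
  ring

theorem hasDerivAt_vvSol (hL0 : 0 ∉ L) {k s : ℕ} (hk : k ∈ L) (hs : s ∈ L) {y : ℝ}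
    (hy : y ≠ 0) (he : eF L lam ε y ≠ 0) :
    HasDerivAt (vvSol L lam ε k s) (vvRHS L lam ε (vvSol L lam ε) k s y) y := by
  have hq : ∀ t ∈ L, HasDerivAt (qF L lam ε t) _ y := fun t ht =>
    hasDerivAt_qF hL0 (ne_of_mem_of_not_mem ht hL0) hy he
  have hoff := ((((hasDerivAt_lhat (lam := lam) (ε := ε) k hy).const_mul ((k : ℝ) * s)).mul
    (hasDerivAt_lhat (lam := lam) (ε := ε) s hy)).mul ((hq k hk).add (hq s hs)))
  have hdiag : HasDerivAt (fun y => if k = s then k * lhat lam ε k y * (1 - ε * y ^ k) else 0)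
      (if k = s then k * (k * lhat lam ε k y / y) * (1 - ε * y ^ k)
        + k * lhat lam ε k y * -(ε * (k * y ^ k / y)) else 0) y := by
    split_ifs
    · exact ((hasDerivAt_lhat k hy).const_mul (k : ℝ)).mul
        (((hasDerivAt_pow_div k hy).const_mul ε).const_sub 1)
    · exact hasDerivAt_const y 0
  refine (hoff.add hdiag).congr_deriv ?_
  rw [vvRHS, sum_vvSol hk, sum_vvSol hs, xF_eq_eF_div hy]
  simp only [vvSol, Pi.mul_apply, Pi.add_apply]
  split_ifs with hks
  · subst hks
    field_simp
    ring
  · field_simp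
    ring

theorem pF_one : pF L lam ε 1 = 0 := by
  have hcb : cF L lam ε 1 = bF L lam ε 1 := by simp only [cF, bF, one_pow, mul_one]
  rw [pF, hcb, div_eq_zero_iff]
  left
  ring

theorem vvSol_one (k s : ℕ) :
    vvSol L lam ε k s 1 = (if k = s then (1 : ℝ) else 0) * k * lam k * ε * (1 - ε) := by
  have hq : ∀ t, qF L lam ε t 1 = 0 := fun t => by simp [qF, rF, pF_one]
  simp only [vvSol, hq, lhat, one_pow]
  split_ifs <;> ring

theorem cEvv_vvSol (hL : L.Nonempty) (hL0 : 0 ∉ L) (hlam : ∀ k ∈ L, 0 < lam k) (hε : 0 < ε) :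
    CEvv L lam ε (vvSol L lam ε) :=
  ⟨fun _ hk _ hs _ hy => (hasDerivAt_vvSol hL0 hk hs hy.1.ne'
    (eF_pos hL hlam hε hy.1).ne').hasDerivWithinAt, fun k _ s _ => vvSol_one k s⟩

theorem vvRHS_eq_sum (δll : ℕ → ℕ → ℝ → ℝ) (p : L × L) (y : ℝ) :
    vvRHS L lam ε δll p.1 p.2 y
      = ∑ q, vvCoeff L lam ε y p q * δll q.1 q.2 y
        + vvRHS L lam ε (fun _ _ _ => 0) p.1 p.2 y := by
  have hrow : ∀ a : L, ∑ q : L × L, (if q.1 = a then (1 : ℝ) else 0) * δll q.1 q.2 y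
      = ∑ t ∈ L, δll a t y := fun a => by
    rw [Fintype.sum_prod_type, ← Finset.sum_coe_sort L]
    simp
  have hdiag :
      ∑ q : L × L, (if q = p then (1 : ℝ) else 0) * δll q.1 q.2 y = δll p.1 p.2 y := by
    simp
  simp only [vvCoeff, vvRHS, mul_assoc, add_mul, sub_mul, Finset.sum_add_distrib,
    Finset.sum_sub_distrib, ← Finset.mul_sum, hrow, hdiag]
  simp only [neg_mul, SetLike.coe_eq_coe, sum_const_zero, mul_zero, add_zero, sub_self,
    zero_sub]
  ring

theorem continuousOn_vvCoeff {a b : ℝ} (he : ∀ y ∈ Icc a b, eF L lam ε y ≠ 0) :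
    ContinuousOn (vvCoeff L lam ε) (Icc a b) := by
  have hx : Continuous (xF L lam ε) := by unfold xF lamP; fun_prop
  have hl : ∀ k, Continuous (lhat lam ε k) := fun k => by unfold lhat; fun_prop
  have hE : Continuous (eF L lam ε) := by unfold eF; fun_prop
  refine continuousOn_pi.2 fun p => continuousOn_pi.2 fun q => ?_
  unfold vvCoeff
  fun_prop (disch := first | exact fun y hy => pow_ne_zero 2 (he y hy) | exact he)

theorem CEvv.hasDerivWithinAt_Iic {δll : ℕ → ℕ → ℝ → ℝ} (h : CEvv L lam ε δll) (p : L × L)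
    {y : ℝ} (hy : y ∈ Ioc (0 : ℝ) 1) :
    HasDerivWithinAt (δll p.1 p.2)
      (∑ q, vvCoeff L lam ε y p q * δll q.1 q.2 y + vvRHS L lam ε (fun _ _ _ => 0) p.1 p.2 y)
      (Iic y) y := by
  rw [← vvRHS_eq_sum]
  exact (h.1 _ p.1.2 _ p.2.2 y hy).mono_of_mem_nhdsWithin
    (Filter.mem_of_superset (Ioc_mem_nhdsLE hy.1) (Ioc_subset_Ioc_right hy.2))

theorem CEvv.continuousOn {δll : ℕ → ℕ → ℝ → ℝ} (h : CEvv L lam ε δll) :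
    ContinuousOn (fun y (p : L × L) => δll p.1 p.2 y) (Ioc 0 1) :=
  continuousOn_pi.2 fun p y hy => (h.1 _ p.1.2 _ p.2.2 y hy).continuousWithinAt

theorem CEvv.unique {δ₁ δ₂ : ℕ → ℕ → ℝ → ℝ} (h₁ : CEvv L lam ε δ₁) (h₂ : CEvv L lam ε δ₂)
    (he : ∀ y ∈ Ioc (0 : ℝ) 1, eF L lam ε y ≠ 0) {k s : ℕ} (hk : k ∈ L) (hs : s ∈ L) {y : ℝ}
    (hy : y ∈ Ioc (0 : ℝ) 1) :
    δ₁ k s y = δ₂ k s y := by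
  have hsub : Icc y 1 ⊆ Ioc 0 1 := fun t ht => ⟨hy.1.trans_le ht.1, ht.2⟩
  have heq := eqOn_of_hasDerivWithinAt_linear_system
    (continuousOn_vvCoeff fun t ht => he t (hsub ht)) (h₁.continuousOn.mono hsub)
    (fun t ht p => h₁.hasDerivWithinAt_Iic p (hsub (Ioc_subset_Icc_self ht)))
    (h₂.continuousOn.mono hsub)
    (fun t ht p => h₂.hasDerivWithinAt_Iic p (hsub (Ioc_subset_Icc_self ht)))
    (funext fun p => by rw [h₁.2 _ p.1.2 _ p.2.2, h₂.2 _ p.1.2 _ p.2.2])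
  exact congrFun (heq ⟨le_rfl, hy.2⟩) (⟨k, hk⟩, ⟨s, hs⟩)

theorem sum_vvSol_div (hL0 : 0 ∉ L) (hlam : ∀ k ∈ L, lam k ≠ 0) (hε : ε ≠ 0) {y : ℝ}
    (hy : y ≠ 0) (he : eF L lam ε y ≠ 0) :
    ∑ k ∈ L, vvSol L lam ε k k y / ((k : ℝ) ^ 2 * lhat lam ε k y) =
      ε * (1 - ε) / eF L lam ε y * (∑ k ∈ L, lam k / (k : ℝ))
        + ∑ k ∈ L,
            ((lhat lam ε k y - eF L lam ε y) / eF L lam ε y) * ((ε * y ^ k - 1) / k) := by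
  have hterm : ∀ k ∈ L, vvSol L lam ε k k y / ((k : ℝ) ^ 2 * lhat lam ε k y)
      - (ε * (1 - ε) / eF L lam ε y * (lam k / k)
        + ((lhat lam ε k y - eF L lam ε y) / eF L lam ε y) * ((ε * y ^ k - 1) / k))
      = 2 * pF L lam ε y * lhat lam ε k y
        + (ε * (lhat lam ε k y * y ^ k / k) + (1 - 2 * ε) * (lhat lam ε k y / k)
          - (1 - ε) * (lhat lam ε k 1 / k)) / eF L lam ε y := fun k hk => by
    have hk0 : (k : ℝ) ≠ 0 := Nat.cast_ne_zero.2 (ne_of_mem_of_not_mem hk hL0)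
    have hl := hlam k hk
    rw [vvSol, if_pos rfl]
    simp only [qF, rF, lhat]
    field_simp
    ring
  rw [← sub_eq_zero, Finset.mul_sum, ← Finset.sum_add_distrib, ← Finset.sum_sub_distrib,
    Finset.sum_congr rfl hterm]
  simp only [Finset.sum_add_distrib, ← Finset.sum_div, Finset.sum_sub_distrib, ← Finset.mul_sum]
  rw [← cF, ← bF, ← bF, ← eF_eq_sum_lhat hL0, pF]
  field_simp
  ring

end

theorem statement_6_general
    (L : Finset ℕ) (hL : L.Nonempty)
    (hL2 : ∀ k ∈ L, 2 ≤ k)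
    (lam : ℕ → ℝ)
    (hlamPos : ∀ k ∈ L, 0 < lam k)
    (ε : ℝ) (hε : ε ∈ Set.Ioo (0 : ℝ) 1)
    (δll : ℕ → ℕ → ℝ → ℝ) (hvv : CEvv L lam ε δll) :
    ∀ y ∈ Set.Ioc (0 : ℝ) 1,
      (∑ k ∈ L, δll k k y / ((k : ℝ) ^ 2 * lhat lam ε k y)) =
        ε * (1 - ε) / eF L lam ε y * (∑ k ∈ L, lam k / (k : ℝ))
        + ∑ k ∈ L, ((lhat lam ε k y - eF L lam ε y) / eF L lam ε y) * ((ε * y ^ k - 1) / (k : ℝ)) := by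
  intro y hy
  have hL0 : 0 ∉ L := fun h => by simpa using hL2 0 h
  have he : ∀ t ∈ Ioc (0 : ℝ) 1, eF L lam ε t ≠ 0 := fun t ht =>
    (eF_pos hL hlamPos hε.1 ht.1).ne'
  have hδ : ∀ k ∈ L, δll k k y = vvSol L lam ε k k y := fun k hk =>
    hvv.unique (cEvv_vvSol hL hL0 hlamPos hε.1) he hk hk hy
  calc ∑ k ∈ L, δll k k y / ((k : ℝ) ^ 2 * lhat lam ε k y)
      = ∑ k ∈ L, vvSol L lam ε k k y / ((k : ℝ) ^ 2 * lhat lam ε k y) :=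
        Finset.sum_congr rfl fun k hk => by rw [hδ k hk]
    _ = _ := sum_vvSol_div hL0 (fun k hk => (hlamPos k hk).ne') hε.1.ne' hy.1.ne' (he y hy)

theorem statement_6
    (L R : Finset ℕ) (hL : L.Nonempty) (hR : R.Nonempty)
    (hL2 : ∀ k ∈ L, 2 ≤ k) (hR2 : ∀ k ∈ R, 2 ≤ k)
    (lam rho : ℕ → ℝ)
    (hlamPos : ∀ k ∈ L, 0 < lam k) (hlamSum : ∑ k ∈ L, lam k = 1)
    (hrhoPos : ∀ k ∈ R, 0 < rho k) (hrhoSum : ∑ k ∈ R, rho k = 1)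
    (ε : ℝ) (hε : ε ∈ Set.Ioo (0 : ℝ) 1)
    (δll : ℕ → ℕ → ℝ → ℝ) (hvv : CEvv L lam ε δll) :
    ∀ y ∈ Set.Ioc (0 : ℝ) 1,
      (∑ k ∈ L, δll k k y / ((k : ℝ) ^ 2 * lhat lam ε k y)) =
        ε * (1 - ε) / eF L lam ε y * (∑ k ∈ L, lam k / (k : ℝ))
        + ∑ k ∈ L, ((lhat lam ε k y - eF L lam ε y) / eF L lam ε y) * ((ε * y ^ k - 1) / (k : ℝ)) :=
  statement_6_general L hL hL2 lam hlamPos ε hε δll hvv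

end LDPC
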